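/- Let Π be a nonempty set of policies, J, J_C : Π → ℝ functions, b ∈ ℝ, and for λ ∈ ℝ define the Lagrangian L(π, λ) = -J(π) + λ·(J_C(π) - b). Suppose λ_a > λ_b ≥ 0, π_a minimizes L(·, λ_a) over Π and π_b minimizes L(·, λ_b) over Π. Then J(π_a) ≤ J(π_b); that is, the reward of the Lagrangian-optimal policy is monotonically non-increasing in the dual variable λ. -/
import Mathlib

/-- Corollary of Theorem 1: the reward `J` of the Lagrangian-optimal policy is
monotonically non-increasing in the dual variable `λ` (for `λ_a > λ_b ≥ 0`). -/
theorem reward_monotone_in_dual_variable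
    {Pol : Type*} [Nonempty Pol] (J J_C : Pol → ℝ) (b : ℝ)
    (L : Pol → ℝ → ℝ)
    (hL : ∀ π lam, L π lam = -J π + lam * (J_C π - b))
    {lam_a lam_b : ℝ} (hlam : lam_a > lam_b) (hlam_b : lam_b ≥ 0)
    {π_a π_b : Pol}
    (ha : ∀ π : Pol, L π_a lam_a ≤ L π lam_a)
    (hb : ∀ π : Pol, L π_b lam_b ≤ L π lam_b) :
    J π_a ≤ J π_b := by
  have h1 := ha π_b
  have h2 := hb π_a
  simp only [hL] at h1 h2
  nlinarith [mul_nonneg hlam_b (sub_nonneg.mpr (by nlinarith : J_C π_a ≤ J_C π_b))]
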